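/- arXiv:1310.0933 — 2 statements merged into one kernel-verified Lean document; each statement's English description precedes it below -/
import Mathlib

section
/- In a Garside monoid of spindle type with atom set X, if b is a positive element not left-divisible by Δ, then there is exactly one word over X representing b. -/
/-- a left-divides b. -/
def LeftDvd {M : Type*} [Monoid M] (a b : M) : Prop := ∃ c : M, b = a * c

/-- a right-divides b. -/
def RightDvd' {M : Type*} [Monoid M] (a b : M) : Prop := ∃ c : M, b = c * a

/-- m is a right lcm of a and b. -/
def IsRightLcm {M : Type*} [Monoid M] (a b m : M) : Prop :=
  LeftDvd a m ∧ LeftDvd b m ∧ ∀ x : M, LeftDvd a x → LeftDvd b x → LeftDvd m x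

/-- m is a left lcm of a and b. -/
def IsLeftLcm {M : Type*} [Monoid M] (a b m : M) : Prop :=
  RightDvd' a m ∧ RightDvd' b m ∧ ∀ x : M, RightDvd' a x → RightDvd' b x → RightDvd' m x

/-- g is a left gcd of a and b. -/
def IsLeftGcd {M : Type*} [Monoid M] (a b g : M) : Prop :=
  LeftDvd g a ∧ LeftDvd g b ∧ ∀ x : M, LeftDvd x a → LeftDvd x b → LeftDvd x g

/-- g is a right gcd of a and b. -/
def IsRightGcd {M : Type*} [Monoid M] (a b g : M) : Prop :=
  RightDvd' g a ∧ RightDvd' g b ∧ ∀ x : M, RightDvd' x a → RightDvd' x b → RightDvd' x g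

/-- A monoid is Noetherian (atomic): the lengths of factorizations of any
    element into non-identity factors are bounded. -/
def NoetherianMonoid (M : Type*) [Monoid M] : Prop :=
  ∀ a : M, ∃ n : ℕ, ∀ l : List M, (∀ x ∈ l, x ≠ 1) → l.prod = a → l.length ≤ n

/-- A Garside monoid structure: a Noetherian cancellative monoid with right and
    left lcms, together with a balanced Garside element Δ whose (finite) set of
    divisors generates the monoid. -/
structure GarsideMonoid (M : Type*) [Monoid M] where
  Δ : M
  noeth : NoetherianMonoid M
  cancel : ∀ a b b' c : M, a * b * c = a * b' * c → b = b'
  rlcm : ∀ a b : M, ∃ m : M, IsRightLcm a b m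
  llcm : ∀ a b : M, ∃ m : M, IsLeftLcm a b m
  balanced : ∀ x : M, LeftDvd x Δ ↔ RightDvd' x Δ
  finS : {x : M | LeftDvd x Δ}.Finite
  genS : Submonoid.closure {x : M | LeftDvd x Δ} = ⊤

/-- The set of simple elements: divisors of the Garside element Δ. -/
def GarsideMonoid.S {M : Type*} [Monoid M] (gs : GarsideMonoid M) : Set M :=
  {x : M | LeftDvd x gs.Δ}

/-- A Garside system is of spindle type if the left and right gcds of any
    two simple elements a, b lie in {a, b, 1}. -/
def GarsideMonoid.SpindleType {M : Type*} [Monoid M] (gs : GarsideMonoid M) : Prop :=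
  (∀ a ∈ gs.S, ∀ b ∈ gs.S, ∀ g : M, IsLeftGcd a b g → g = a ∨ g = b ∨ g = 1) ∧
  (∀ a ∈ gs.S, ∀ b ∈ gs.S, ∀ g : M, IsRightGcd a b g → g = a ∨ g = b ∨ g = 1)

/-- x is an atom: non-identity and admitting no nontrivial factorization. -/
def IsAtomOf (M : Type*) [Monoid M] (x : M) : Prop :=
  x ≠ 1 ∧ ∀ y z : M, x = y * z → y = 1 ∨ z = 1

/-!
If two atom words for `b` had distinct first letters `a ≠ a'`, then `b` would be left-divisible
by their right lcm `m`. Writing `Δ = a ∂a = a' ∂a' = m e`, the element `e` right-divides both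
complements `∂a` and `∂a'`; by the spindle condition their right gcd is `∂a`, `∂a'` or `1`. The
first two cases force `a = a'` because atoms do not factor, so the gcd is `1`, hence `e = 1` and
`m = Δ` divides `b`. Thus the first letters agree, and after cancelling them the remaining element
is still not divisible by `Δ`, since `a Δ = Δ a''` for some `a''` when `a` is simple; induct on
the word.
-/

section General

variable {M : Type*} [Monoid M]

theorem RightDvd'.trans {a b c : M} (hab : RightDvd' a b) (hbc : RightDvd' b c) :
    RightDvd' a c := by
  obtain ⟨u, rfl⟩ := hab
  obtain ⟨v, rfl⟩ := hbc
  exact ⟨v * u, (mul_assoc v u a).symm⟩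

theorem NoetherianMonoid.mul_eq_one (hM : NoetherianMonoid M) {x y : M} (h : x * y = 1) :
    x = 1 ∧ y = 1 := by
  by_contra hxy
  have hx : x ≠ 1 := fun hx => hxy ⟨hx, by simpa [hx] using h⟩
  have hy : y ≠ 1 := fun hy => hx (by simpa [hy] using h)
  obtain ⟨n, hn⟩ := hM 1
  -- `(x y)^(n+1)` is a factorization of `1` into `2 (n + 1)` nontrivial factors.
  have hlen := hn (List.replicate (n + 1) [x, y]).flatten ?_ (by simp [h])
  · simp [List.length_flatten] at hlen
    omega
  · simp only [List.mem_flatten, List.mem_replicate]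
    rintro z ⟨_, ⟨-, rfl⟩, hz⟩
    rcases List.mem_pair.1 hz with rfl | rfl <;> assumption

theorem NoetherianMonoid.eq_nil_of_prod_eq_one (hM : NoetherianMonoid M) {l : List M}
    (hl : ∀ x ∈ l, IsAtomOf M x) (h : l.prod = 1) : l = [] := by
  cases l with
  | nil => rfl
  | cons a t =>
    rw [List.prod_cons] at h
    exact absurd (hM.mul_eq_one h).1 (hl a List.mem_cons_self).1

theorem IsAtomOf.mem_of_prod_eq {a : M} (ha : IsAtomOf M a) {l : List M} (h : l.prod = a) :
    a ∈ l := by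
  induction l with
  | nil => exact absurd h.symm ha.1
  | cons s t ih =>
    rw [List.prod_cons] at h
    rcases ha.2 s t.prod h.symm with hs | ht
    · exact List.mem_cons_of_mem s (ih (by rwa [hs, one_mul] at h))
    · rw [ht, mul_one] at h
      exact h ▸ List.mem_cons_self

theorem IsAtomOf.mem_of_mem_closure {a : M} (ha : IsAtomOf M a) {s : Set M}
    (hs : a ∈ Submonoid.closure s) : a ∈ s := by
  obtain ⟨l, hl, hprod⟩ := Submonoid.exists_list_of_mem_closure hs
  exact hl a (ha.mem_of_prod_eq hprod)

theorem IsAtomOf.eq_of_mul_eq_mul_of_rightDvd' [IsRightCancelMul M] {a a' d d' : M}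
    (ha : IsAtomOf M a) (ha' : a' ≠ 1) (h : a * d = a' * d') (hdd' : RightDvd' d d') :
    a = a' := by
  obtain ⟨f, rfl⟩ := hdd'
  have haf : a = a' * f := mul_right_cancel (by rw [h, mul_assoc])
  rcases ha.2 a' f haf with h' | hf
  · exact absurd h' ha'
  · rw [haf, hf, mul_one]

theorem exists_isRightGcd_of_finite (hllcm : ∀ a b : M, ∃ m : M, IsLeftLcm a b m) {a b : M}
    (hfin : {x : M | RightDvd' x a ∧ RightDvd' x b}.Finite) : ∃ g : M, IsRightGcd a b g := by
  set D := {x : M | RightDvd' x a ∧ RightDvd' x b}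
  have hbound : ∃ g ∈ D, ∀ x ∈ D, RightDvd' x g := by
    refine Set.Finite.induction_on_subset
      (motive := fun t _ => ∃ g ∈ D, ∀ x ∈ t, RightDvd' x g) D hfin
      ⟨1, ⟨⟨a, (mul_one a).symm⟩, ⟨b, (mul_one b).symm⟩⟩, by simp⟩ ?_
    rintro x t hxD - - ⟨g, hgD, hg⟩
    obtain ⟨m, hxm, hgm, hm⟩ := hllcm x g
    refine ⟨m, ⟨hm a hxD.1 hgD.1, hm b hxD.2 hgD.2⟩, ?_⟩
    rintro y (rfl | hy)
    · exact hxm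
    · exact (hg y hy).trans hgm
  obtain ⟨g, ⟨hga, hgb⟩, hg⟩ := hbound
  exact ⟨g, hga, hgb, fun x hxa hxb => hg x ⟨hxa, hxb⟩⟩

end General

namespace GarsideMonoid

variable {M : Type*} [Monoid M] (gs : GarsideMonoid M)

theorem isCancelMul (gs : GarsideMonoid M) : IsCancelMul M where
  mul_left_cancel a b c h := gs.cancel a b c 1 (by simpa using h)
  mul_right_cancel a b c h := gs.cancel 1 b c a (by simpa using h)

theorem atom_mem_S {a : M} (ha : IsAtomOf M a) : a ∈ gs.S :=
  ha.mem_of_mem_closure (gs.genS ▸ Submonoid.mem_top a)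

theorem complement_mem_S {a d : M} (hd : gs.Δ = a * d) : d ∈ gs.S :=
  (gs.balanced d).2 ⟨a, hd⟩

theorem exists_isRightGcd {a : M} (ha : a ∈ gs.S) (b : M) : ∃ g : M, IsRightGcd a b g := by
  refine exists_isRightGcd_of_finite gs.llcm (gs.finS.subset fun x hx => ?_)
  exact (gs.balanced x).2 (hx.1.trans ((gs.balanced a).1 ha))

theorem leftDvd_Δ_mul {a b : M} (ha : a ∈ gs.S) (hb : LeftDvd gs.Δ b) :
    LeftDvd gs.Δ (a * b) := by
  obtain ⟨d, hd⟩ := ha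
  obtain ⟨φa, hφa⟩ := gs.complement_mem_S hd
  obtain ⟨c, rfl⟩ := hb
  have hcomm : a * gs.Δ = gs.Δ * φa :=
    calc a * gs.Δ = a * d * φa := by rw [mul_assoc, ← hφa]
      _ = gs.Δ * φa := by rw [← hd]
  exact ⟨φa * c, by rw [← mul_assoc, hcomm, mul_assoc]⟩

theorem leftDvd_Δ_of_atoms_leftDvd (hsp : gs.SpindleType) {a a' c : M} (ha : IsAtomOf M a)
    (ha' : IsAtomOf M a') (hne : a ≠ a') (hac : LeftDvd a c) (ha'c : LeftDvd a' c) :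
    LeftDvd gs.Δ c := by
  have := gs.isCancelMul
  obtain ⟨m, ⟨u, hu⟩, ⟨u', hu'⟩, hm⟩ := gs.rlcm a a'
  obtain ⟨d, hd⟩ := gs.atom_mem_S ha
  obtain ⟨d', hd'⟩ := gs.atom_mem_S ha'
  obtain ⟨e, he⟩ := hm gs.Δ ⟨d, hd⟩ ⟨d', hd'⟩
  suffices e = 1 by
    rw [he, this, mul_one]
    exact hm c hac ha'c
  have hed : RightDvd' e d := ⟨u, mul_left_cancel (by rw [← hd, he, hu, mul_assoc])⟩
  have hed' : RightDvd' e d' := ⟨u', mul_left_cancel (by rw [← hd', he, hu', mul_assoc])⟩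
  have hdd' : a * d = a' * d' := hd.symm.trans hd'
  have hdS := gs.complement_mem_S hd
  obtain ⟨g, hg⟩ := gs.exists_isRightGcd hdS d'
  rcases hsp.2 d hdS d' (gs.complement_mem_S hd') g hg with rfl | rfl | rfl
  · exact absurd (ha.eq_of_mul_eq_mul_of_rightDvd' ha'.1 hdd' hg.2.1) hne
  · exact absurd (ha'.eq_of_mul_eq_mul_of_rightDvd' ha.1 hdd'.symm hg.1) hne.symm
  · obtain ⟨f, hf⟩ := hg.2.2 e hed hed'
    exact (gs.noeth.mul_eq_one hf.symm).2

theorem eq_of_prod_eq_of_not_leftDvd_Δ (hsp : gs.SpindleType) {l₁ l₂ : List M}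
    (h₁ : ∀ x ∈ l₁, IsAtomOf M x) (h₂ : ∀ x ∈ l₂, IsAtomOf M x) (hprod : l₁.prod = l₂.prod)
    (hΔ : ¬ LeftDvd gs.Δ l₁.prod) : l₁ = l₂ := by
  have := gs.isCancelMul
  induction l₁ generalizing l₂ with
  | nil => exact (gs.noeth.eq_nil_of_prod_eq_one h₂ hprod.symm).symm
  | cons a t ih =>
    cases l₂ with
    | nil => exact absurd (gs.noeth.eq_nil_of_prod_eq_one h₁ hprod) (List.cons_ne_nil a t)
    | cons a' t' =>
      rw [List.prod_cons, List.prod_cons] at hprod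
      rw [List.prod_cons] at hΔ
      have ha := h₁ a List.mem_cons_self
      obtain rfl : a = a' := by
        by_contra hne
        exact hΔ (gs.leftDvd_Δ_of_atoms_leftDvd hsp ha (h₂ a' List.mem_cons_self) hne
          ⟨_, rfl⟩ ⟨_, hprod⟩)
      refine congrArg (a :: ·) (ih (fun x hx => h₁ x (List.mem_cons_of_mem a hx))
        (fun x hx => h₂ x (List.mem_cons_of_mem a hx)) (mul_left_cancel hprod) ?_)
      exact fun ht => hΔ (gs.leftDvd_Δ_mul (gs.atom_mem_S ha) ht)

end GarsideMonoid

/-- In a Garside monoid of spindle type, a positive element not left-divisible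
    by Δ has exactly one representing word over the atoms. -/
theorem stmt_5 {M : Type*} [Monoid M] (gs : GarsideMonoid M)
    (hsp : gs.SpindleType) (b : M) (hb : ¬ LeftDvd gs.Δ b) :
    ∀ l₁ l₂ : List M, (∀ x ∈ l₁, IsAtomOf M x) → (∀ x ∈ l₂, IsAtomOf M x) →
      l₁.prod = b → l₂.prod = b → l₁ = l₂ := by
  rintro l₁ l₂ h₁ h₂ rfl hprod
  exact gs.eq_of_prod_eq_of_not_leftDvd_Δ hsp h₁ h₂ hprod.symm hb
end

section
/- In a Garside monoid of spindle type, if Δ left-divides a positive element b, then every word over the atoms representing b contains a factor (infix) that represents Δ. -/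
/-!
Write `H m` for the left gcd of `Δ` and `m` (the head of `m`). For an atom `x` with
`Δ = x * p`, one has `H (x * u) = x * gcd (p, H u)`, and spindle type forces this gcd to be
`p`, `H u` or `1`. Since `p` is a coatom of the divisor lattice of `Δ`, this gives
`H (x * u) = x * H u` or `H (x * u) = x`, unless `H u = Δ`. By induction along a word of atoms,
either its head is represented by a prefix of the word, or the word already contains a factor
representing `Δ`. When `Δ` divides `b` the head of `b` is `Δ`, so both cases give the factor.
-/

-- `(u * v) ^ (n + 1)` would be a factorization of `1` into `2 * (n + 1)` non-identity factors.
theorem NoetherianMonoid.left_eq_one_of_mul_eq_one {M : Type*} [Monoid M]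
    (hM : NoetherianMonoid M) {u v : M} (h : u * v = 1) : u = 1 := by
  by_contra hu
  have hv : v ≠ 1 := fun hv => hu (by simpa [hv] using h)
  obtain ⟨n, hn⟩ := hM 1
  have hlen := hn (List.replicate (n + 1) [u, v]).flatten ?_ (by simp [List.prod_flatten, h])
  · simp only [List.length_flatten, List.map_replicate, List.length_cons, List.length_nil,
      zero_add, Nat.reduceAdd, List.sum_replicate, smul_eq_mul] at hlen
    omega
  · intro y hy
    obtain ⟨w, hw, hyw⟩ := List.mem_flatten.1 hy
    rw [List.eq_of_mem_replicate hw, List.mem_pair] at hyw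
    rcases hyw with rfl | rfl
    exacts [hu, hv]

namespace GarsideMonoid

-- `LeftDvd a b` unfolds to `a ∣ b`, so the two are used interchangeably below.
variable {M : Type*} [Monoid M]

theorem mul_left_cancel (gs : GarsideMonoid M) {a b c : M} (h : a * b = a * c) : b = c :=
  gs.cancel a b c 1 (by simpa using h)

theorem mul_right_cancel (gs : GarsideMonoid M) {a b c : M} (h : a * c = b * c) : a = b :=
  gs.cancel 1 a b c (by simpa using h)

theorem dvd_antisymm (gs : GarsideMonoid M) {a b : M} (hab : a ∣ b) (hba : b ∣ a) : a = b := by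
  obtain ⟨c, rfl⟩ := hab
  obtain ⟨d, hd⟩ := hba
  have hcd : c * d = 1 := gs.mul_left_cancel (by rw [← mul_assoc, ← hd, mul_one])
  rw [gs.noeth.left_eq_one_of_mul_eq_one hcd, mul_one]

theorem dvd_delta_of_isAtomOf (gs : GarsideMonoid M) {x : M} (hx : IsAtomOf M x) : x ∣ gs.Δ := by
  have hmem : x ∈ Submonoid.closure gs.S := by
    rw [S, gs.genS]
    trivial
  induction hmem using Submonoid.closure_induction with
  | mem y hy => exact hy
  | one => exact absurd rfl hx.1
  | mul y z _ _ hy hz =>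
    rcases hx.2 y z rfl with rfl | rfl
    · simpa using hz (by simpa using hx)
    · simpa using hy (by simpa using hx)

theorem exists_lcm_finset (gs : GarsideMonoid M) (F : Finset M) :
    ∃ m : M, (∀ t ∈ F, t ∣ m) ∧ ∀ c : M, (∀ t ∈ F, t ∣ c) → m ∣ c := by
  classical
  induction F using Finset.induction_on with
  | empty => exact ⟨1, by simp, fun c _ => one_dvd c⟩
  | insert a F _ ih =>
    obtain ⟨g, hgF, hg⟩ := ih
    obtain ⟨m, ham, hgm, hm⟩ := gs.rlcm a g
    refine ⟨m, ?_, fun c hc => hm c (hc a (Finset.mem_insert_self a F))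
      (hg c fun t ht => hc t (Finset.mem_insert_of_mem ht))⟩
    intro t ht
    rcases Finset.mem_insert.1 ht with rfl | ht
    · exact ham
    · exact dvd_trans (hgF t ht) hgm

-- The gcd is the lcm of the finitely many simple common divisors.
theorem exists_isLeftGcd_delta (gs : GarsideMonoid M) (m : M) :
    ∃ g : M, IsLeftGcd gs.Δ m g := by
  have hfin : {x : M | x ∣ gs.Δ ∧ x ∣ m}.Finite := gs.finS.subset fun x hx => hx.1
  obtain ⟨g, hdvd_g, hg⟩ := gs.exists_lcm_finset hfin.toFinset
  exact ⟨g, hg _ fun t ht => (hfin.mem_toFinset.1 ht).1,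
    hg _ fun t ht => (hfin.mem_toFinset.1 ht).2,
    fun x hxΔ hxm => hdvd_g x (hfin.mem_toFinset.2 ⟨hxΔ, hxm⟩)⟩

noncomputable def head (gs : GarsideMonoid M) (m : M) : M :=
  (gs.exists_isLeftGcd_delta m).choose

theorem isLeftGcd_head (gs : GarsideMonoid M) (m : M) : IsLeftGcd gs.Δ m (gs.head m) :=
  (gs.exists_isLeftGcd_delta m).choose_spec

theorem head_one (gs : GarsideMonoid M) : gs.head 1 = 1 := by
  obtain ⟨c, hc⟩ := (gs.isLeftGcd_head 1).2.1
  exact gs.noeth.left_eq_one_of_mul_eq_one hc.symm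

theorem head_eq_delta_of_dvd (gs : GarsideMonoid M) {m : M} (h : gs.Δ ∣ m) : gs.head m = gs.Δ :=
  gs.dvd_antisymm (gs.isLeftGcd_head m).1 ((gs.isLeftGcd_head m).2.2 _ dvd_rfl h)

theorem exists_mul_delta_eq_delta_mul (gs : GarsideMonoid M) {m : M} (hm : m ∣ gs.Δ) :
    ∃ w : M, w * gs.Δ = gs.Δ * m := by
  obtain ⟨k, hk⟩ := (gs.balanced m).1 hm
  obtain ⟨w, hw⟩ := (gs.balanced k).1 ⟨m, hk⟩
  refine ⟨w, ?_⟩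
  calc w * gs.Δ = w * k * m := by rw [mul_assoc, ← hk]
    _ = gs.Δ * m := by rw [← hw]

-- Conjugation by `Δ` turns `Δ = p * r * c` into a factorization `x = r' * c'` of the atom.
theorem eq_or_eq_delta_of_dvd_of_eq_atom_mul (gs : GarsideMonoid M) {x p t : M}
    (hx : IsAtomOf M x) (hp : gs.Δ = x * p) (hpt : p ∣ t) (ht : t ∣ gs.Δ) :
    t = p ∨ t = gs.Δ := by
  obtain ⟨r, rfl⟩ := hpt
  obtain ⟨c, hc⟩ := ht
  have hr : r ∣ gs.Δ :=
    dvd_trans (dvd_mul_right r c) ((gs.balanced _).2 ⟨p, by rw [hc, mul_assoc]⟩)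
  have hc' : c ∣ gs.Δ := (gs.balanced c).2 ⟨p * r, hc⟩
  obtain ⟨r', hr'⟩ := gs.exists_mul_delta_eq_delta_mul hr
  obtain ⟨c', hc''⟩ := gs.exists_mul_delta_eq_delta_mul hc'
  have hx' : x = r' * c' := gs.mul_right_cancel <| calc
    x * gs.Δ = x * p * (r * c) := by nth_rewrite 1 [hc]; simp only [mul_assoc]
    _ = r' * (gs.Δ * c) := by rw [← hp, ← mul_assoc, ← hr', mul_assoc]
    _ = r' * c' * gs.Δ := by rw [← hc'', mul_assoc]
  rcases hx.2 r' c' hx' with rfl | rfl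
  · left
    rw [gs.mul_left_cancel (b := r) (c := 1) (by rw [← hr', one_mul, mul_one]), mul_one]
  · right
    rw [hc, gs.mul_left_cancel (b := c) (c := 1) (by rw [← hc'', one_mul, mul_one]), mul_one]

theorem exists_head_atom_mul_eq (gs : GarsideMonoid M) {x p : M} (u : M) (hp : gs.Δ = x * p) :
    ∃ h : M, gs.head (x * u) = x * h ∧ IsLeftGcd p (gs.head u) h := by
  have hH := gs.isLeftGcd_head (x * u)
  have hHu := gs.isLeftGcd_head u
  obtain ⟨h, hh⟩ := hH.2.2 x ⟨p, hp⟩ (dvd_mul_right x u)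
  obtain ⟨m, hm⟩ := hH.1
  have hp' : p ∣ gs.Δ := (gs.balanced p).2 ⟨x, hp⟩
  have hhp : h ∣ p := ⟨m, gs.mul_left_cancel (by rw [← hp, hm, hh, mul_assoc])⟩
  have hhu : h ∣ u := by
    obtain ⟨c, hc⟩ := hH.2.1
    exact ⟨c, gs.mul_left_cancel (by rw [← mul_assoc, ← hh, ← hc])⟩
  refine ⟨h, hh, hhp, hHu.2.2 h (dvd_trans hhp hp') hhu, fun k hkp hku => ?_⟩
  obtain ⟨c, hc⟩ := hH.2.2 (x * k) (by rw [hp]; exact mul_dvd_mul_left x hkp)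
    (mul_dvd_mul_left x (dvd_trans hku hHu.2.1))
  exact ⟨c, gs.mul_left_cancel (by rw [← mul_assoc, ← hh, hc, mul_assoc])⟩

theorem head_atom_mul_eq (gs : GarsideMonoid M) (hsp : gs.SpindleType) {x : M} (u : M)
    (hx : IsAtomOf M x) :
    gs.head (x * u) = x * gs.head u ∨ gs.head (x * u) = x ∨ gs.head u = gs.Δ := by
  obtain ⟨p, hp⟩ := gs.dvd_delta_of_isAtomOf hx
  obtain ⟨h, hxh, hgcd⟩ := gs.exists_head_atom_mul_eq u hp
  have hpS : p ∈ gs.S := (gs.balanced p).2 ⟨x, hp⟩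
  rcases hsp.1 p hpS _ (gs.isLeftGcd_head u).1 h hgcd with rfl | rfl | rfl
  · rcases gs.eq_or_eq_delta_of_dvd_of_eq_atom_mul hx hp hgcd.2.1 (gs.isLeftGcd_head u).1
      with hu | hu
    · exact Or.inl (hu ▸ hxh)
    · exact Or.inr (Or.inr hu)
  · exact Or.inl hxh
  · exact Or.inr (Or.inl (by rw [hxh, mul_one]))

theorem exists_prefix_prod_eq_head_or_infix_prod_eq_delta (gs : GarsideMonoid M)
    (hsp : gs.SpindleType) {l : List M} (hl : ∀ x ∈ l, IsAtomOf M x) :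
    (∃ d, d <+: l ∧ d.prod = gs.head l.prod) ∨ ∃ d, d <:+: l ∧ d.prod = gs.Δ := by
  induction l with
  | nil => exact Or.inl ⟨[], List.nil_prefix, by rw [List.prod_nil, gs.head_one]⟩
  | cons x u ih =>
    have hu : ∀ y ∈ u, IsAtomOf M y := fun y hy => hl y (List.mem_cons_of_mem x hy)
    have hinfix :
        (∃ d, d <:+: u ∧ d.prod = gs.Δ) → ∃ d, d <:+: x :: u ∧ d.prod = gs.Δ :=
      fun ⟨d, hd, hdΔ⟩ => ⟨d, hd.trans (List.infix_cons List.infix_rfl), hdΔ⟩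
    rw [List.prod_cons]
    rcases gs.head_atom_mul_eq hsp u.prod (hl x List.mem_cons_self) with hH | hH | hΔ
    · rcases ih hu with ⟨d, hd, hdH⟩ | hd
      · exact Or.inl ⟨x :: d, (List.prefix_cons_inj x).2 hd, by rw [List.prod_cons, hdH, hH]⟩
      · exact Or.inr (hinfix hd)
    · exact Or.inl
        ⟨[x], (List.prefix_cons_inj x).2 List.nil_prefix, by rw [hH, List.prod_singleton]⟩
    · rcases ih hu with ⟨d, hd, hdH⟩ | hd
      · exact Or.inr (hinfix ⟨d, hd.isInfix, hdH.trans hΔ⟩)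
      · exact Or.inr (hinfix hd)

end GarsideMonoid

/-- In a Garside monoid of spindle type, if Δ left-divides b then every
    word over the atoms representing b contains an infix representing Δ. -/
theorem stmt_6 {M : Type*} [Monoid M] (gs : GarsideMonoid M)
    (hsp : gs.SpindleType) (b : M) (hb : LeftDvd gs.Δ b) :
    ∀ l : List M, (∀ x ∈ l, IsAtomOf M x) → l.prod = b →
      ∃ u d v : List M, l = u ++ d ++ v ∧ d.prod = gs.Δ := by
  intro l hl hprod
  have hhead : gs.head l.prod = gs.Δ := gs.head_eq_delta_of_dvd (hprod ▸ hb)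
  obtain ⟨d, ⟨u, v, hl_eq⟩, hdΔ⟩ : ∃ d, d <:+: l ∧ d.prod = gs.Δ := by
    rcases gs.exists_prefix_prod_eq_head_or_infix_prod_eq_delta hsp hl with ⟨d, hd, hdH⟩ | hd
    · exact ⟨d, hd.isInfix, hdH.trans hhead⟩
    · exact hd
  exact ⟨u, d, v, hl_eq.symm, hdΔ⟩
end
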